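/- arXiv:2010.12603 — 8 statements merged into one kernel-verified Lean document; each statement's English description precedes it below -/
import Mathlib

section
/- For any finite index set R of size n and real numbers p_s ∈ [0,1] for s ∈ R, and any r ∈ R: p_r · (1/n!) · ∑_{π ∈ permutations of R} ∏_{s : π(s) < π(r)} (1 - p_s) equals p_r · ∑_{S ⊆ R \ {r}} ((-1)^{|S|}/(|S|+1)) · ∏_{s ∈ S} p_s. -/
open Finset

lemma count_aux {R : Type*} [Fintype R] [DecidableEq R] (S : Finset R) (r : R)
    (hr : r ∉ S) :
    ((Finset.univ.filter
        (fun π : R ≃ Fin (Fintype.card R) => ∀ s ∈ S, π s < π r)).card)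
      * (S.card + 1) = (Fintype.card R).factorial := by
  classical
  set n := Fintype.card R with hn
  set A : Finset R := insert r S with hA
  have hcardA : A.card = S.card + 1 := Finset.card_insert_of_notMem hr
  have hrA : r ∈ A := Finset.mem_insert_self r S
  -- the argmax function
  have hne : ∀ π : R ≃ Fin n, (A.image π).Nonempty :=
    fun π => ⟨π r, Finset.mem_image_of_mem π hrA⟩
  set g : (R ≃ Fin n) → R := fun π => π.symm ((A.image π).max' (hne π)) with hg
  have hgA : ∀ π, g π ∈ A := by
    intro π
    obtain ⟨a, ha, hax⟩ := Finset.mem_image.1 ((A.image π).max'_mem (hne π))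
    have : g π = a := by simp [hg, ← hax]
    rwa [this]
  have hfiber : ∀ (a : R), a ∈ A → ∀ π : R ≃ Fin n,
      (g π = a ↔ ∀ b ∈ A, π b ≤ π a) := by
    intro a ha π
    constructor
    · intro h b hb
      have hmax : π b ≤ (A.image π).max' (hne π) :=
        Finset.le_max' _ _ (Finset.mem_image_of_mem π hb)
      have : π a = (A.image π).max' (hne π) := by
        rw [← h]; simp [hg]
      rw [this]; exact hmax
    · intro h
      have hmem : π a ∈ A.image π := Finset.mem_image_of_mem π ha
      have h1 : (A.image π).max' (hne π) ≤ π a := by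
        apply Finset.max'_le
        intro y hy
        obtain ⟨b, hb, rfl⟩ := Finset.mem_image.1 hy
        exact h b hb
      have h2 : π a ≤ (A.image π).max' (hne π) := Finset.le_max' _ _ hmem
      have : (A.image π).max' (hne π) = π a := le_antisymm h1 h2
      simp [hg, this]
  have hpartition : (Fintype.card (R ≃ Fin n)) =
      ∑ a ∈ A, (Finset.univ.filter (fun π : R ≃ Fin n => ∀ b ∈ A, π b ≤ π a)).card := by
    rw [← Finset.card_univ]
    rw [Finset.card_eq_sum_card_fiberwise (f := g) (t := A) (fun π _ => hgA π)]
    refine Finset.sum_congr rfl ?_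
    intro a ha
    congr 1
    apply Finset.filter_congr
    intro π _
    simpa using hfiber a ha π
  -- all fibers have the same cardinality
  have hsame : ∀ a ∈ A,
      (Finset.univ.filter (fun π : R ≃ Fin n => ∀ b ∈ A, π b ≤ π a)).card
      = (Finset.univ.filter (fun π : R ≃ Fin n => ∀ b ∈ A, π b ≤ π r)).card := by
    intro a ha
    apply Finset.card_bij' (fun π _ => (Equiv.swap a r).trans π)
      (fun π _ => (Equiv.swap a r).trans π)
    · intro π hπ
      simp only [Finset.mem_filter, Finset.mem_univ, true_and] at hπ ⊢
      intro b hb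
      have hswap : Equiv.swap a r b ∈ A := by
        rcases eq_or_ne b a with rfl | hba
        · simpa [Equiv.swap_apply_left] using hrA
        · rcases eq_or_ne b r with rfl | hbr
          · simpa [Equiv.swap_apply_right] using ha
          · simpa [Equiv.swap_apply_of_ne_of_ne hba hbr] using hb
      simpa [Equiv.trans_apply, Equiv.swap_apply_right] using hπ _ hswap
    · intro π hπ
      simp only [Finset.mem_filter, Finset.mem_univ, true_and] at hπ ⊢
      intro b hb
      have hswap : Equiv.swap a r b ∈ A := by
        rcases eq_or_ne b a with rfl | hba
        · simpa [Equiv.swap_apply_left] using hrA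
        · rcases eq_or_ne b r with rfl | hbr
          · simpa [Equiv.swap_apply_right] using ha
          · simpa [Equiv.swap_apply_of_ne_of_ne hba hbr] using hb
      simpa [Equiv.trans_apply, Equiv.swap_apply_left] using hπ _ hswap
    · intro π _
      ext x
      simp [Equiv.trans_apply]
    · intro π _
      ext x
      simp [Equiv.trans_apply]
  have hNN : (Finset.univ.filter (fun π : R ≃ Fin n => ∀ b ∈ A, π b ≤ π r))
      = (Finset.univ.filter (fun π : R ≃ Fin n => ∀ s ∈ S, π s < π r)) := by
    apply Finset.filter_congr
    intro π _
    constructor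
    · intro h s hs
      have hsr : s ≠ r := fun hsr => hr (hsr ▸ hs)
      have h1 : π s ≤ π r := h s (Finset.mem_insert_of_mem hs)
      exact lt_of_le_of_ne h1 (fun hc => hsr (π.injective hc))
    · intro h b hb
      rcases Finset.mem_insert.1 hb with rfl | hbS
      · exact le_refl _
      · exact le_of_lt (h b hbS)
  have hcardEq : Fintype.card (R ≃ Fin n) = n.factorial :=
    Fintype.card_equiv (Fintype.equivFin R)
  calc (Finset.univ.filter (fun π : R ≃ Fin n => ∀ s ∈ S, π s < π r)).card * (S.card + 1)
      = ∑ a ∈ A, (Finset.univ.filter (fun π : R ≃ Fin n => ∀ b ∈ A, π b ≤ π a)).card := by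
        rw [Finset.sum_congr rfl hsame, Finset.sum_const, hcardA, hNN]
        ring
    _ = n.factorial := by rw [← hpartition, hcardEq]

theorem stmt_2 {R : Type*} [Fintype R] [DecidableEq R] (p : R → ℝ)
    (hp : ∀ s, p s ∈ Set.Icc (0 : ℝ) 1) (r : R) :
    p r * ((1 : ℝ) / (Nat.factorial (Fintype.card R)) *
      ∑ π : R ≃ Fin (Fintype.card R),
        ∏ s ∈ Finset.univ.filter (fun s => π s < π r), (1 - p s))
    = p r * ∑ S ∈ (Finset.univ.erase r).powerset,
        ((-1 : ℝ) ^ S.card / (S.card + 1)) * ∏ s ∈ S, p s := by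
  classical
  set n := Fintype.card R with hn
  congr 1
  have hexp : ∀ π : R ≃ Fin n,
      ∏ s ∈ Finset.univ.filter (fun s => π s < π r), (1 - p s)
      = ∑ t ∈ (Finset.univ.erase r).powerset,
          (if ∀ s ∈ t, π s < π r then (-1 : ℝ) ^ t.card * ∏ s ∈ t, p s else 0) := by
    intro π
    set B : Finset R := Finset.univ.filter (fun s => π s < π r) with hB
    have hBP : B.powerset = (Finset.univ.erase r).powerset.filter
        (fun t => ∀ s ∈ t, π s < π r) := by
      ext t
      simp only [Finset.mem_powerset, Finset.mem_filter, hB]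
      constructor
      · intro h
        refine ⟨fun s hs => ?_, fun s hs => ?_⟩
        · have := h hs
          simp only [Finset.mem_filter, Finset.mem_univ, true_and] at this
          exact Finset.mem_erase.2 ⟨fun hc => absurd (hc ▸ this) (lt_irrefl _), Finset.mem_univ s⟩
        · have := h hs
          simpa using this
      · intro ⟨h1, h2⟩ s hs
        simp only [Finset.mem_filter, Finset.mem_univ, true_and]
        exact h2 s hs
    have h1 : ∏ s ∈ B, (1 - p s) = ∏ s ∈ B, ((-p s) + 1) := by
      apply Finset.prod_congr rfl; intro s _; ring
    rw [h1, Finset.prod_add]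
    have h2 : ∀ t ∈ B.powerset,
        (∏ s ∈ t, (-p s)) * ∏ s ∈ B \ t, (1 : ℝ)
        = (-1 : ℝ) ^ t.card * ∏ s ∈ t, p s := by
      intro t _
      rw [Finset.prod_const_one, mul_one]
      rw [show (fun s => -p s) = (fun s => (-1 : ℝ) * p s) by funext s; ring]
      rw [Finset.prod_mul_distrib, Finset.prod_const]
    rw [Finset.sum_congr rfl h2, hBP, Finset.sum_filter]
  rw [Finset.sum_congr rfl (fun π _ => hexp π), Finset.sum_comm]
  rw [Finset.mul_sum]
  refine Finset.sum_congr rfl ?_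
  intro t ht
  have hrt : r ∉ t := by
    intro hc
    have := Finset.mem_powerset.1 ht hc
    exact (Finset.mem_erase.1 this).1 rfl
  have hcount := count_aux t r hrt
  have hfac : ((n.factorial : ℝ)) ≠ 0 := Nat.cast_ne_zero.2 (Nat.factorial_ne_zero n)
  have hk : ((t.card : ℝ) + 1) ≠ 0 := by positivity
  have hN : ((Finset.univ.filter (fun π : R ≃ Fin n => ∀ s ∈ t, π s < π r)).card : ℝ)
      = (n.factorial : ℝ) / ((t.card : ℝ) + 1) := by
    rw [eq_div_iff hk]
    exact_mod_cast congrArg (Nat.cast : ℕ → ℝ) hcount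
  rw [← Finset.sum_filter, Finset.sum_const, nsmul_eq_mul, hN]
  field_simp
end

section
/- Let p ∈ (0,1]^n and define g_r(p) = (1/n!) ∑_{π} ∏_{t : π(t) < π(r)} (1 - p_t), summing over all permutations π of {1,...,n}. If p_r ≤ p_s, then g_r(p) ≤ g_s(p). -/
theorem stmt_6 {n : ℕ} (p : Fin n → ℝ) (hp : ∀ s, p s ∈ Set.Ioc (0 : ℝ) 1)
    (r s : Fin n) (hrs : p r ≤ p s) :
    (1 : ℝ) / (Nat.factorial n) *
      ∑ π : Equiv.Perm (Fin n), ∏ t ∈ Finset.univ.filter (fun t => π t < π r), (1 - p t)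
    ≤ (1 : ℝ) / (Nat.factorial n) *
      ∑ π : Equiv.Perm (Fin n), ∏ t ∈ Finset.univ.filter (fun t => π t < π s), (1 - p t) := by
  rcases eq_or_ne r s with rfl | hne
  · exact le_rfl
  have hnonneg : ∀ t, 0 ≤ 1 - p t := fun t => by linarith [(hp t).2]
  apply mul_le_mul_of_nonneg_left _ (by positivity)
  rw [← Equiv.sum_comp (Equiv.mulRight (Equiv.swap r s))
      (fun π : Equiv.Perm (Fin n) => ∏ t ∈ Finset.univ.filter (fun t => π t < π r), (1 - p t))]
  apply Finset.sum_le_sum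
  intro π _
  simp only [Equiv.coe_mulRight, Equiv.Perm.mul_apply, Equiv.swap_apply_left]
  by_cases hlt : π r < π s
  · have hB : r ∈ Finset.univ.filter (fun t => π t < π s) := by simp [hlt]
    have hset : Finset.univ.filter (fun t => π (Equiv.swap r s t) < π s)
        = insert s ((Finset.univ.filter (fun t => π t < π s)).erase r) := by
      ext t
      rcases eq_or_ne t r with rfl | htr
      · simp [Equiv.swap_apply_left, Ne.symm hne, hne]
      rcases eq_or_ne t s with rfl | hts
      · simp [Equiv.swap_apply_right, hlt]
      · simp [Equiv.swap_apply_of_ne_of_ne htr hts, htr, hts]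
    rw [hset, Finset.prod_insert (by simp), ← Finset.mul_prod_erase _ _ hB]
    exact mul_le_mul_of_nonneg_right (by linarith)
      (Finset.prod_nonneg fun t _ => hnonneg t)
  · have hset : Finset.univ.filter (fun t => π (Equiv.swap r s t) < π s)
        = Finset.univ.filter (fun t => π t < π s) := by
      ext t
      rcases eq_or_ne t r with rfl | htr
      · simp [Equiv.swap_apply_left, hlt]
      rcases eq_or_ne t s with rfl | hts
      · simp [Equiv.swap_apply_right, hlt]
      · simp [Equiv.swap_apply_of_ne_of_ne htr hts]
    rw [hset]
end

section
/- Let p ∈ (0,1]^n with p_s = p for s < n and p_n = 1, where p ∈ (0,1]. The probability that the permute-and-flip process (iterate through a uniformly random permutation of the n items and return the first item whose Bernoulli(p_r) coin is heads) returns item n equals (1 - (1-p)^n)/(np). -/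
/-!
Off the returned item every coin has probability `p`, so the product over the items ranked before
`lastIdx` is `(1 - p) ^ π lastIdx`. Under a uniform permutation `π lastIdx` is uniform on `Fin n`,
so the probability is the average `(1/n) ∑_{k<n} (1 - p)^k = (1 - (1 - p)^n) / (n p)`.
-/

open Finset

theorem Equiv.Perm.card_filter_apply_lt {n : ℕ} (π : Equiv.Perm (Fin n)) (k : Fin n) :
    #{s | π s < k} = k := by
  rw [← Fin.card_Iio k, ← card_map π.toEmbedding]
  congr 1
  ext t
  simp

theorem Equiv.Perm.prod_filter_apply_lt {M : Type*} [CommMonoid M] {n : ℕ}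
    (π : Equiv.Perm (Fin n)) (a : Fin n) (f : Fin n → M) (c : M) (hf : ∀ s ≠ a, f s = c) :
    ∏ s with π s < π a, f s = c ^ (π a : ℕ) := by
  rw [prod_congr rfl fun s hs => hf s ?_, prod_const, π.card_filter_apply_lt]
  rintro rfl
  exact lt_irrefl _ (mem_filter.1 hs).2

theorem Equiv.Perm.card_nsmul_sum_comp_apply {α M : Type*} [Fintype α] [DecidableEq α]
    [AddCommMonoid M] (f : α → M) (a : α) :
    Fintype.card α • ∑ π : Equiv.Perm α, f (π a) = (Fintype.card α).factorial • ∑ b, f b := by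
  -- precomposing with `swap a x` shows that the law of `π x` does not depend on `x`
  have hindep : ∀ x, ∑ π : Equiv.Perm α, f (π x) = ∑ π : Equiv.Perm α, f (π a) := fun x =>
    (Equiv.sum_comp (Equiv.mulRight (Equiv.swap a x)) fun π => f (π x)).symm.trans
      (by simp [Equiv.Perm.mul_apply])
  calc Fintype.card α • ∑ π : Equiv.Perm α, f (π a)
      = ∑ x, ∑ π : Equiv.Perm α, f (π x) := by simp [hindep, card_univ]
    _ = ∑ π : Equiv.Perm α, ∑ b, f b := by
        rw [sum_comm]; exact sum_congr rfl fun π _ => Equiv.sum_comp π f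
    _ = (Fintype.card α).factorial • ∑ b, f b := by simp [Fintype.card_perm, card_univ]

/-- The probability that permute-and-flip returns item `n` (the item with coin
probability 1), expressed via its probability mass function
`Pr[PF = r] = p_r · (1/n!) · ∑_π ∏_{s : π(s) < π(r)} (1 - p_s)`. -/
theorem stmt_7 (n : ℕ) (p : ℝ) (hp : p ∈ Set.Ioc (0 : ℝ) 1)
    (q : Fin n → ℝ) (lastIdx : Fin n)
    (hq : ∀ s, q s = if s = lastIdx then 1 else p) :
    q lastIdx * ((1 : ℝ) / (Nat.factorial n) *
      ∑ π : Equiv.Perm (Fin n),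
        ∏ s ∈ Finset.univ.filter (fun s => π s < π lastIdx), (1 - q s))
    = (1 - (1 - p) ^ n) / (n * p) := by
  have hq_last : q lastIdx = 1 := by simp [hq]
  have hprod (π : Equiv.Perm (Fin n)) :
      ∏ s with π s < π lastIdx, (1 - q s) = (1 - p) ^ (π lastIdx : ℕ) :=
    π.prod_filter_apply_lt lastIdx _ _ fun s hs => by simp [hq, hs]
  have havg := Equiv.Perm.card_nsmul_sum_comp_apply (fun k : Fin n => (1 - p) ^ (k : ℕ)) lastIdx
  have hgeom : (∑ k : Fin n, (1 - p) ^ (k : ℕ)) * p = 1 - (1 - p) ^ n := by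
    simpa [Fin.sum_univ_eq_sum_range] using geom_sum_mul_neg (1 - p) n
  simp only [Fintype.card_fin, nsmul_eq_mul] at havg
  have hn : (n : ℝ) ≠ 0 := by have := lastIdx.pos; positivity
  have hp0 : p ≠ 0 := hp.1.ne'
  rw [hq_last, one_mul, sum_congr rfl fun π _ => hprod π, ← hgeom]
  field_simp
  linear_combination havg
end

section
/- For all p ∈ (0,1) and all integers n ≥ 2: (1 - (1-(1-p)^n)/(np)) ≤ (1 - 1/(1+(n-1)p)). Consequently, for q = (c,...,c,0) with c < 0, the expected error of permute-and-flip (2Δ/ε)·log(1/p)·(1 - (1-(1-p)^n)/(np)) is at most the expected error of the exponential mechanism (2Δ/ε)·log(1/p)·(1 - 1/(1+(n-1)p)), where p = exp(εc/(2Δ)). -/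
lemma key_pow (q : ℝ) (hq0 : 0 ≤ q) (hq1 : q ≤ 1) :
    ∀ n : ℕ, 1 ≤ n → (n : ℝ) * q ^ (n - 1) ≤ 1 + ((n : ℝ) - 1) * q ^ n := by
  intro n hn
  induction n with
  | zero => omega
  | succ m ih =>
    rcases Nat.eq_or_lt_of_le hn with h | h
    · simp [← h]
    · have hm : 1 ≤ m := by omega
      have IH := ih hm
      have hms : m - 1 + 1 = m := by omega
      have hpow : q ^ m = q ^ (m - 1) * q := by
        rw [← pow_succ, hms]
      have hq' : 0 ≤ q ^ (m - 1) := pow_nonneg hq0 _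
      have hqm : q ^ m ≤ 1 := pow_le_one₀ hq0 hq1
      push_cast
      simp only [Nat.add_sub_cancel, pow_succ]
      nlinarith [mul_le_mul_of_nonneg_right IH hq0, mul_nonneg hq' hq0,
        mul_nonneg (mul_nonneg hq' hq0) hq0]

lemma main_ineq (n : ℕ) (hn : 2 ≤ n) (p : ℝ) (hp : p ∈ Set.Ioo (0 : ℝ) 1) :
    1 - (1 - (1 - p) ^ n) / (n * p) ≤ 1 - 1 / (1 + ((n : ℝ) - 1) * p) := by
  obtain ⟨hp0, hp1⟩ := hp
  have hn1 : (1 : ℝ) ≤ (n : ℝ) - 1 := by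
    have : (2 : ℝ) ≤ n := by exact_mod_cast hn
    linarith
  have hd1 : 0 < (n : ℝ) * p := by positivity
  have hd2 : 0 < 1 + ((n : ℝ) - 1) * p := by nlinarith
  have hq0 : 0 ≤ 1 - p := by linarith
  have hq1 : 1 - p ≤ 1 := by linarith
  have key := key_pow (1 - p) hq0 hq1 n (by omega)
  have hpow : (1 - p) ^ n = (1 - p) ^ (n - 1) * (1 - p) := by
    rw [← pow_succ]; congr 1; omega
  have h2 : 1 / (1 + ((n : ℝ) - 1) * p) ≤ (1 - (1 - p) ^ n) / ((n : ℝ) * p) := by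
    rw [div_le_div_iff₀ hd2 hd1]
    have hA : 0 ≤ (1 - p) ^ (n - 1) := pow_nonneg hq0 _
    nlinarith [mul_le_mul_of_nonneg_right key hq0,
      mul_le_mul_of_nonneg_right (mul_le_mul_of_nonneg_right key hq0) hq0,
      mul_nonneg hA hq0]
  linarith

theorem stmt_11 (n : ℕ) (hn : 2 ≤ n) (Δ ε : ℝ) (hΔ : 0 < Δ) (hε : 0 < ε) :
    (∀ p ∈ Set.Ioo (0 : ℝ) 1,
      1 - (1 - (1 - p) ^ n) / (n * p) ≤ 1 - 1 / (1 + (n - 1) * p)) ∧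
    (∀ c : ℝ, c < 0 →
      (2 * Δ / ε) * Real.log (1 / Real.exp (ε * c / (2 * Δ))) *
        (1 - (1 - (1 - Real.exp (ε * c / (2 * Δ))) ^ n) / (n * Real.exp (ε * c / (2 * Δ))))
      ≤ (2 * Δ / ε) * Real.log (1 / Real.exp (ε * c / (2 * Δ))) *
        (1 - 1 / (1 + (n - 1) * Real.exp (ε * c / (2 * Δ))))) := by
  constructor
  · exact fun p hp => main_ineq n hn p hp
  · intro c hc
    set x := ε * c / (2 * Δ) with hx
    have hxneg : x < 0 := by
      apply div_neg_of_neg_of_pos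
      · exact mul_neg_of_pos_of_neg hε hc
      · linarith
    have hp : Real.exp x ∈ Set.Ioo (0 : ℝ) 1 :=
      ⟨Real.exp_pos x, by rw [← Real.exp_zero]; exact Real.exp_lt_exp.mpr hxneg⟩
    have hlog : Real.log (1 / Real.exp x) = -x := by
      rw [one_div, Real.log_inv, Real.log_exp]
    have hfac : 0 ≤ (2 * Δ / ε) * Real.log (1 / Real.exp x) := by
      rw [hlog]
      apply mul_nonneg
      · positivity
      · linarith
    exact mul_le_mul_of_nonneg_left (main_ineq n hn _ hp) hfac
end

section
/- For all p ∈ (0,1) and integers n ≥ 2, the ratio of the exponential mechanism's expected error to that of permute-and-flip on q = (c,...,c,0), namely ((1 - 1/(1+(n-1)p)) / (1 - (1-(1-p)^n)/(np)), is at most 2. -/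
/-!
By the geometric sum, the denominator equals the average of `1 - (1 - p) ^ k` over `k < n`.
Bernoulli's inequality gives `(1 + k p) (1 - p) ^ k ≤ (1 - p ^ 2) ^ k ≤ 1`, so each of these
terms is at least `k p / (1 + (n - 1) p)`, and their average is at least
`(n - 1) p / (2 (1 + (n - 1) p))`, half the numerator.
-/

open Finset

theorem one_add_mul_mul_one_sub_pow_le_one {p : ℝ} (hp0 : 0 ≤ p) (hp1 : p ≤ 1) (k : ℕ) :
    (1 + k * p) * (1 - p) ^ k ≤ 1 :=
  calc (1 + k * p) * (1 - p) ^ k ≤ (1 + p) ^ k * (1 - p) ^ k :=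
        mul_le_mul_of_nonneg_right (one_add_mul_le_pow (by linarith) k) (pow_nonneg (by linarith) k)
    _ = (1 - p ^ 2) ^ k := by rw [← mul_pow]; ring
    _ ≤ 1 := pow_le_one₀ (by nlinarith) (by nlinarith)

theorem sum_range_natCast_mul_two (n : ℕ) : (∑ k ∈ range n, (k : ℝ)) * 2 = n * (n - 1) := by
  induction n with
  | zero => simp
  | succ n ih => rw [sum_range_succ, add_mul, ih]; push_cast; ring

theorem one_sub_one_sub_pow_eq_mul_geom_sum (p : ℝ) (n : ℕ) :
    1 - (1 - p) ^ n = p * ∑ k ∈ range n, (1 - p) ^ k := by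
  linear_combination geom_sum_mul (1 - p) n

theorem one_sub_div_eq_sum_div {p : ℝ} (hp : p ≠ 0) {n : ℕ} (hn : n ≠ 0) :
    1 - (1 - (1 - p) ^ n) / (n * p) = (∑ k ∈ range n, (1 - (1 - p) ^ k)) / n := by
  rw [one_sub_one_sub_pow_eq_mul_geom_sum, sum_sub_distrib, sum_const, card_range, nsmul_one]
  field_simp

theorem mul_sub_one_mul_le_sum_one_sub_pow {p : ℝ} (hp0 : 0 ≤ p) (hp1 : p ≤ 1) (n : ℕ) :
    n * (n - 1) * p ≤ 2 * (1 + (n - 1) * p) * ∑ k ∈ range n, (1 - (1 - p) ^ k) := by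
  have termwise : ∀ k ∈ range n, k * p ≤ (1 + (n - 1) * p) * (1 - (1 - p) ^ k) := by
    intro k hk
    have hkn : (k : ℝ) ≤ n - 1 := by
      have : (k : ℝ) + 1 ≤ n := by exact_mod_cast mem_range.mp hk
      linarith
    have hpow : (1 - p) ^ k ≤ 1 := pow_le_one₀ (by linarith) (by linarith)
    nlinarith [one_add_mul_mul_one_sub_pow_le_one hp0 hp1 k,
      mul_le_mul_of_nonneg_right (mul_le_mul_of_nonneg_right hkn hp0) (sub_nonneg.mpr hpow)]
  calc (n : ℝ) * (n - 1) * p = 2 * ∑ k ∈ range n, (k : ℝ) * p := by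
        rw [← sum_mul, ← sum_range_natCast_mul_two]; ring
    _ ≤ 2 * ∑ k ∈ range n, (1 + (n - 1) * p) * (1 - (1 - p) ^ k) := by
        gcongr 2 * ?_; exact sum_le_sum termwise
    _ = _ := by rw [← mul_sum, mul_assoc]

theorem stmt_12 (n : ℕ) (hn : 2 ≤ n) (p : ℝ) (hp : p ∈ Set.Ioo (0 : ℝ) 1) :
    (1 - 1 / (1 + (n - 1) * p)) / (1 - (1 - (1 - p) ^ n) / (n * p)) ≤ 2 := by
  obtain ⟨hp0, hp1⟩ := hp
  have hn : (2 : ℝ) ≤ n := by exact_mod_cast hn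
  have hA : 0 < 1 + (n - 1) * p := by nlinarith
  set S := ∑ k ∈ range n, (1 - (1 - p) ^ k)
  have hS := mul_sub_one_mul_le_sum_one_sub_pow hp0.le hp1.le n
  have hS_pos : 0 < S := by
    by_contra! h
    nlinarith [mul_pos (mul_pos (by linarith : (0 : ℝ) < n) (by linarith : (0 : ℝ) < n - 1)) hp0]
  rw [one_sub_div_eq_sum_div hp0.ne' (by positivity), div_le_iff₀ (by positivity),
    one_sub_div hA.ne', div_le_iff₀ hA]
  field_simp
  linarith
end

section
/- For real numbers 0 < p_1 < p_2 ≤ 1, if p_1 log(p_1) ≥ p_2 log(p_2), a > 0, b ≥ 0, and m = (p_1+p_2)/2, then m·log(m)·(a(1-m)+b)·2 < p_1 log(p_1)(a(1-p_2)+b) + p_2 log(p_2)(a(1-p_1)+b). -/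
/-!
The inequality is linear in `(a, b)`. The `b`-part is midpoint convexity of `f p = p log p`.
For the `a`-part, with `m` the midpoint, `t ↦ f(m-t)(1-(m+t)) + f(m+t)(1-(m-t))` is strictly
increasing while `m + t ≤ 1`: writing `q₁ = m - t`, `q₂ = m + t`, `d = q₂ - q₁`, its derivative
`(1 + d) log q₂ - (1 - d) log q₁ + d` is positive by `log (q₁/q₂) ≤ q₁/q₂ - 1` (the weight
`1 - d = 1 - q₂ + q₁` is positive) and `2 q₂ log q₂ > -1`.
-/

open Real Set

lemma log_lt_div_two {y : ℝ} (hy : 0 < y) : log y < y / 2 := by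
  have h := log_le_sub_one_of_pos (half_pos hy)
  rw [log_div hy.ne' two_ne_zero] at h
  linarith [log_two_lt_d9]

lemma neg_one_lt_two_mul_mul_log {x : ℝ} (hx : 0 < x) : -1 < 2 * (x * log x) := by
  have h := log_lt_div_two (inv_pos.2 hx)
  rw [log_inv] at h
  nlinarith [mul_inv_cancel₀ hx.ne']

lemma add_mul_log_sub_mul_log_pos {q₁ q₂ : ℝ} (h₁ : 0 < q₁) (h₁₂ : q₁ < q₂) (h₂ : q₂ ≤ 1) :
    0 < (1 + (q₂ - q₁)) * log q₂ - (1 - (q₂ - q₁)) * log q₁ + (q₂ - q₁) := by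
  have hq₂ : 0 < q₂ := h₁.trans h₁₂
  have hlog : q₂ * log q₁ ≤ q₂ * log q₂ + q₁ - q₂ := by
    have h := log_le_sub_one_of_pos (div_pos h₁ hq₂)
    rw [log_div h₁.ne' hq₂.ne'] at h
    have h' := mul_le_mul_of_nonneg_left h hq₂.le
    rw [mul_sub, mul_sub, mul_div_cancel₀ _ hq₂.ne', mul_one] at h'
    linarith
  have hmin := neg_one_lt_two_mul_mul_log hq₂
  nlinarith [mul_le_mul_of_nonneg_left hlog (by linarith : (0 : ℝ) ≤ 1 - (q₂ - q₁)),
    mul_lt_mul_of_pos_left hmin (by linarith : (0 : ℝ) < q₂ - q₁), mul_pos h₁ hq₂]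

noncomputable def mulLogCross (m t : ℝ) : ℝ :=
  (m - t) * log (m - t) * (1 - (m + t)) + (m + t) * log (m + t) * (1 - (m - t))

lemma hasDerivAt_mulLogCross {m t : ℝ} (h₁ : 0 < m - t) (h₂ : 0 < m + t) :
    HasDerivAt (mulLogCross m)
      ((1 + 2 * t) * log (m + t) - (1 - 2 * t) * log (m - t) + 2 * t) t := by
  have hsub : HasDerivAt (fun s => m - s) (-1) t := by
    simpa using (hasDerivAt_id t).const_sub m
  have hadd : HasDerivAt (fun s => m + s) 1 t := by
    simpa using (hasDerivAt_id t).const_add m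
  have hf₁ := (hasDerivAt_mul_log h₁.ne').comp t hsub
  have hf₂ := (hasDerivAt_mul_log h₂.ne').comp t hadd
  refine ((hf₁.mul (hadd.const_sub 1)).add (hf₂.mul (hsub.const_sub 1))).congr_deriv ?_
  simp only [Function.comp_apply]
  ring

lemma strictMonoOn_mulLogCross {m r : ℝ} (hr₁ : 0 < m - r) (hr₂ : m + r ≤ 1) :
    StrictMonoOn (mulLogCross m) (Icc 0 r) := by
  have hderiv : ∀ t ∈ Icc 0 r, HasDerivAt (mulLogCross m)
      ((1 + 2 * t) * log (m + t) - (1 - 2 * t) * log (m - t) + 2 * t) t := fun t ht =>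
    hasDerivAt_mulLogCross (by linarith [ht.2]) (by linarith [ht.1, ht.2])
  refine strictMonoOn_of_hasDerivWithinAt_pos (convex_Icc 0 r)
    (fun t ht => (hderiv t ht).continuousAt.continuousWithinAt)
    (fun t ht => (hderiv t (interior_subset ht)).hasDerivWithinAt) fun t ht => ?_
  rw [interior_Icc] at ht
  have h := add_mul_log_sub_mul_log_pos (q₁ := m - t) (q₂ := m + t)
    (by linarith [ht.2]) (by linarith [ht.1]) (by linarith [ht.2])
  convert h using 2 <;> ring

lemma two_mul_mul_log_mul_one_sub_midpoint_lt {p₁ p₂ : ℝ} (h₁ : 0 < p₁) (h₁₂ : p₁ < p₂)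
    (h₂ : p₂ ≤ 1) :
    (p₁ + p₂) / 2 * log ((p₁ + p₂) / 2) * (1 - (p₁ + p₂) / 2) * 2
      < p₁ * log p₁ * (1 - p₂) + p₂ * log p₂ * (1 - p₁) := by
  set m := (p₁ + p₂) / 2
  set r := (p₂ - p₁) / 2
  have hr : 0 < r := by simp only [r]; linarith
  have hmr₁ : m - r = p₁ := by simp only [m, r]; ring
  have hmr₂ : m + r = p₂ := by simp only [m, r]; ring
  have h := strictMonoOn_mulLogCross (by rwa [hmr₁]) (by rwa [hmr₂]) (left_mem_Icc.2 hr.le)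
    (right_mem_Icc.2 hr.le) hr
  simp only [mulLogCross, sub_zero, add_zero, hmr₁, hmr₂] at h
  linarith

lemma mul_log_midpoint_mul_two_le {p₁ p₂ : ℝ} (h₁ : 0 ≤ p₁) (h₂ : 0 ≤ p₂) :
    (p₁ + p₂) / 2 * log ((p₁ + p₂) / 2) * 2 ≤ p₁ * log p₁ + p₂ * log p₂ := by
  have h := convexOn_mul_log.2 (mem_Ici.2 h₁) (mem_Ici.2 h₂) (by norm_num : (0 : ℝ) ≤ 1 / 2)
    (by norm_num : (0 : ℝ) ≤ 1 / 2) (by norm_num)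
  simp only [smul_eq_mul] at h
  rw [show 1 / 2 * p₁ + 1 / 2 * p₂ = (p₁ + p₂) / 2 by ring] at h
  linarith

theorem stmt_14_general (a b p₁ p₂ : ℝ) (ha : 0 < a) (hb : 0 ≤ b)
    (h₁ : 0 < p₁) (h₁₂ : p₁ < p₂) (h₂ : p₂ ≤ 1)
    (m : ℝ) (hm : m = (p₁ + p₂) / 2) :
    m * Real.log m * (a * (1 - m) + b) * 2
    < p₁ * Real.log p₁ * (a * (1 - p₂) + b) + p₂ * Real.log p₂ * (a * (1 - p₁) + b) := by
  subst hm
  have hA := mul_lt_mul_of_pos_left (two_mul_mul_log_mul_one_sub_midpoint_lt h₁ h₁₂ h₂) ha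
  have hB := mul_le_mul_of_nonneg_left (mul_log_midpoint_mul_two_le h₁.le (h₁.trans h₁₂).le) hb
  linarith

theorem stmt_14 (a b p₁ p₂ : ℝ) (ha : 0 < a) (hb : 0 ≤ b)
    (h₁ : 0 < p₁) (h₁₂ : p₁ < p₂) (h₂ : p₂ ≤ 1)
    (hlog : p₁ * Real.log p₁ ≥ p₂ * Real.log p₂) (m : ℝ) (hm : m = (p₁ + p₂) / 2) :
    m * Real.log m * (a * (1 - m) + b) * 2
    < p₁ * Real.log p₁ * (a * (1 - p₂) + b) + p₂ * Real.log p₂ * (a * (1 - p₁) + b) :=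
  stmt_14_general a b p₁ p₂ ha hb h₁ h₁₂ h₂ m hm
end

section
/- The exponential mechanism M_EM on quality scores q ∈ ℝ^n, defined by Pr[M_EM(q)=r] = exp(εq_r/(2Δ))/∑_s exp(εq_s/(2Δ)), satisfies: for all q, all r, and all z ∈ [-Δ,Δ]^n, Pr[M_EM(q)=r] ≤ exp(ε)·Pr[M_EM(q+z)=r]. -/
/-! A shift of every score by at most `Δ` changes each weight `exp (ε q_s / (2Δ))` by a factor
between `exp (-ε/2)` and `exp (ε/2)`; one such factor comes from the numerator and one from the
normalising sum, and together they give `exp ε`. -/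

open Real Finset

theorem div_sum_le_mul_mul_div_sum {ι : Type*} [Fintype ι] {f g : ι → ℝ} {a b : ℝ}
    (hf : ∀ i, 0 < f i) (hg : ∀ i, 0 < g i)
    (hfg : ∀ i, f i ≤ a * g i) (hgf : ∀ i, g i ≤ b * f i) (r : ι) :
    f r / ∑ i, f i ≤ a * b * (g r / ∑ i, g i) := by
  have hne : (univ : Finset ι).Nonempty := ⟨r, mem_univ r⟩
  have hsum_g_le : ∑ i, g i ≤ b * ∑ i, f i := by
    rw [mul_sum]
    exact sum_le_sum fun i _ => hgf i
  rw [← mul_div_assoc, div_le_div_iff₀ (sum_pos (fun i _ => hf i) hne)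
    (sum_pos (fun i _ => hg i) hne)]
  calc f r * ∑ i, g i ≤ a * g r * (b * ∑ i, f i) :=
        mul_le_mul (hfg r) hsum_g_le (sum_nonneg fun i _ => (hg i).le)
          ((hf r).le.trans (hfg r))
    _ = a * b * g r * ∑ i, f i := by ring

theorem exp_mul_div_le_exp_half_mul_exp {ε Δ x y : ℝ} (hε : 0 ≤ ε) (hΔ : 0 < Δ)
    (h : x - y ≤ Δ) :
    exp (ε * x / (2 * Δ)) ≤ exp (ε / 2) * exp (ε * y / (2 * Δ)) := by
  rw [← exp_add, exp_le_exp, ← sub_le_iff_le_add, ← sub_div, ← mul_sub,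
    div_le_iff₀ (by positivity)]
  calc ε * (x - y) ≤ ε * Δ := mul_le_mul_of_nonneg_left h hε
    _ = ε / 2 * (2 * Δ) := by ring

theorem stmt_16_general (n : ℕ) (ε Δ : ℝ) (hε : 0 < ε) (hΔ : 0 < Δ)
    (q z : Fin n → ℝ) (hz : ∀ i, |z i| ≤ Δ) (r : Fin n) :
    Real.exp (ε * q r / (2 * Δ)) / (∑ s, Real.exp (ε * q s / (2 * Δ)))
    ≤ Real.exp ε *
      (Real.exp (ε * (q r + z r) / (2 * Δ)) / (∑ s, Real.exp (ε * (q s + z s) / (2 * Δ)))) := by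
  have hq : ∀ s, exp (ε * q s / (2 * Δ)) ≤ exp (ε / 2) * exp (ε * (q s + z s) / (2 * Δ)) :=
    fun s => exp_mul_div_le_exp_half_mul_exp hε.le hΔ (by linarith [neg_abs_le (z s), hz s])
  have hqz : ∀ s, exp (ε * (q s + z s) / (2 * Δ)) ≤ exp (ε / 2) * exp (ε * q s / (2 * Δ)) :=
    fun s => exp_mul_div_le_exp_half_mul_exp hε.le hΔ (by linarith [le_abs_self (z s), hz s])
  calc exp (ε * q r / (2 * Δ)) / ∑ s, exp (ε * q s / (2 * Δ))
      ≤ exp (ε / 2) * exp (ε / 2) *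
          (exp (ε * (q r + z r) / (2 * Δ)) / ∑ s, exp (ε * (q s + z s) / (2 * Δ))) :=
        div_sum_le_mul_mul_div_sum (fun _ => exp_pos _) (fun _ => exp_pos _) hq hqz r
    _ = exp ε * (exp (ε * (q r + z r) / (2 * Δ)) / ∑ s, exp (ε * (q s + z s) / (2 * Δ))) := by
        rw [← exp_add, add_halves]

theorem stmt_16 (n : ℕ) (hn : 1 ≤ n) (ε Δ : ℝ) (hε : 0 < ε) (hΔ : 0 < Δ)
    (q z : Fin n → ℝ) (hz : ∀ i, |z i| ≤ Δ) (r : Fin n) :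
    Real.exp (ε * q r / (2 * Δ)) / (∑ s, Real.exp (ε * q s / (2 * Δ)))
    ≤ Real.exp ε *
      (Real.exp (ε * (q r + z r) / (2 * Δ)) / (∑ s, Real.exp (ε * (q s + z s) / (2 * Δ)))) :=
  stmt_16_general n ε Δ hε hΔ q z hz r
end

section
/- Suppose a mechanism M : ℝ^n → probability distributions on {1,...,n} is shift-invariant (Pr[M(q)=r] = Pr[M(q+c·1)=r] for all c ∈ ℝ) and monotone (if q_r ≤ q'_r and q_s ≥ q'_s for all s ≠ r, then Pr[M(q)=r] ≤ Pr[M(q')=r]). If Pr[M(q)=r] ≥ exp(-ε)·Pr[M(q+2Δe_r)=r] for all q and r, then Pr[M(q)=r] ≤ exp(ε)·Pr[M(q+z)=r] for all q, r and all z ∈ [-Δ,Δ]^n. -/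
theorem stmt_17 (n : ℕ) (hn : 1 ≤ n) (ε Δ : ℝ) (hε : 0 < ε) (hΔ : 0 < Δ)
    (M : (Fin n → ℝ) → Fin n → ℝ)
    (hshift : ∀ (q : Fin n → ℝ) (c : ℝ) (r : Fin n), M q r = M (fun i => q i + c) r)
    (hmono : ∀ (q q' : Fin n → ℝ) (r : Fin n),
      q r ≤ q' r → (∀ s, s ≠ r → q' s ≤ q s) → M q r ≤ M q' r)
    (hkey : ∀ (q : Fin n → ℝ) (r : Fin n),
      M q r ≥ Real.exp (-ε) * M (fun i => if i = r then q i + 2 * Δ else q i) r) :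
    ∀ (q z : Fin n → ℝ) (r : Fin n), (∀ i, |z i| ≤ Δ) →
      M q r ≤ Real.exp ε * M (fun i => q i + z i) r := by
  intro q z r hz
  have hE : (0:ℝ) < Real.exp ε := Real.exp_pos ε
  set p : Fin n → ℝ := fun i => q i + z i + (-Δ) with hp
  have hshift' : M (fun i => q i + z i) r = M p r := hshift _ (-Δ) r
  have hkey' := hkey p r
  have h1 : M (fun i => if i = r then p i + 2 * Δ else p i) r ≤ Real.exp ε * M p r := by
    rw [ge_iff_le] at hkey'
    have h := mul_le_mul_of_nonneg_left hkey' hE.le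
    have he : Real.exp ε * Real.exp (-ε) = 1 := by
      rw [← Real.exp_add]; simp
    calc M (fun i => if i = r then p i + 2 * Δ else p i) r
        = Real.exp ε * (Real.exp (-ε) * M (fun i => if i = r then p i + 2 * Δ else p i) r) := by
          rw [← mul_assoc, he, one_mul]
      _ ≤ Real.exp ε * M p r := h
  have h2 : M q r ≤ M (fun i => if i = r then p i + 2 * Δ else p i) r := by
    apply hmono
    · simp only [if_pos rfl, hp, if_true]
      have := abs_le.mp (hz r)
      linarith
    · intro s hs
      simp only [if_neg hs, hp]
      have := abs_le.mp (hz s)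
      linarith
  rw [hshift']
  linarith
end
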